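/- arXiv:0712.4115 — 5 statements merged into one kernel-verified Lean document; each statement's English description precedes it below -/
import Mathlib

section
/- Let H be an n×N matrix over F₂ such that every row of H has even Hamming weight and any two distinct rows of H have exactly one common position at which both rows are nonzero. Let M = [H | 1 | I] be the n×(N+1+n) matrix obtained from H by appending the all-ones column vector and the n×n identity matrix. Then M is self-orthogonal, i.e., M·Mᵀ = 0 over F₂. -/
/-!
Over `F₂` the inner product of two rows counts their overlaps mod 2. Splitting `M` into blocks,
`M Mᵀ = H Hᵀ + J + I` with `J` the all-ones matrix; the hypotheses say `H Hᵀ = J + I`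
(zero diagonal, ones elsewhere), and `2 (J + I) = 0`.
-/

open Matrix Finset

lemma ZMod.two_sum_mul_eq_card_filter {ι : Type*} [Fintype ι] (a b : ι → ZMod 2) :
    ∑ j, a j * b j = (#{j | a j ≠ 0 ∧ b j ≠ 0} : ZMod 2) := by
  rw [natCast_card_filter]
  refine sum_congr rfl fun j _ => ?_
  generalize a j = x
  generalize b j = y
  revert x y
  decide

lemma Matrix.fromCols_mul_transpose_fromCols {R m n₁ n₂ : Type*} [Semiring R]
    [Fintype n₁] [Fintype n₂] (A : Matrix m n₁ R) (B : Matrix m n₂ R) :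
    fromCols A B * (fromCols A B)ᵀ = A * Aᵀ + B * Bᵀ := by
  rw [transpose_fromCols, fromCols_mul_fromRows]

lemma mul_transpose_eq_of_even_of_card_overlap_eq_one {m k : Type*} [Fintype k] [DecidableEq m]
    (H : Matrix m k (ZMod 2)) (heven : ∀ i, Even #{j | H i j ≠ 0})
    (hoverlap : ∀ i i', i ≠ i' → #{j | H i j ≠ 0 ∧ H i' j ≠ 0} = 1) :
    H * Hᵀ = of fun i i' => if i = i' then 0 else 1 := by
  ext i i'
  rw [mul_apply, of_apply]
  simp only [transpose_apply]
  rw [ZMod.two_sum_mul_eq_card_filter]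
  split_ifs with h
  · subst h
    simpa only [and_self, ZMod.natCast_eq_zero_iff] using (heven i).two_dvd
  · rw [hoverlap i i' h, Nat.cast_one]

/-- If every row of the binary matrix `H` has even Hamming weight and any two
distinct rows overlap in exactly one position, then the matrix `M = [H | 1 | I]` obtained by
appending the all-ones column and the `n × n` identity matrix is self-orthogonal:
`M * Mᵀ = 0` over `F₂`. -/
theorem stmt_1 (n N : ℕ) (H : Matrix (Fin n) (Fin N) (ZMod 2))
    (heven : ∀ i : Fin n, Even (Finset.univ.filter (fun j : Fin N => H i j ≠ 0)).card)
    (hoverlap : ∀ i i' : Fin n, i ≠ i' →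
      (Finset.univ.filter (fun j : Fin N => H i j ≠ 0 ∧ H i' j ≠ 0)).card = 1)
    (M : Matrix (Fin n) ((Fin N ⊕ Unit) ⊕ Fin n) (ZMod 2))
    (hM : ∀ i : Fin n, M i =
      Sum.elim (Sum.elim (H i) (fun _ => 1)) (fun k : Fin n => if i = k then 1 else 0)) :
    M * Mᵀ = 0 := by
  have hM_blocks : M = fromCols (fromCols H (of fun _ (_ : Unit) => 1)) 1 := by
    ext i ((j | u) | k) <;> simp [hM, one_apply]
  rw [hM_blocks, fromCols_mul_transpose_fromCols, fromCols_mul_transpose_fromCols,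
    mul_transpose_eq_of_even_of_card_overlap_eq_one H heven hoverlap]
  ext i i'
  by_cases h : i = i' <;> simp [h, mul_apply] <;> decide
end

section
/- Let H be an m×n matrix over F₂ such that every column of H has exactly ρ nonzero entries (with ρ ≥ 1) and any two distinct columns of H have at most one common row position at which both columns are nonzero. Then every nonzero vector x ∈ F₂ⁿ with H·x = 0 has Hamming weight at least ρ + 1; i.e., the linear code defined as the null space of H has minimum distance at least ρ + 1. -/
open Matrix

/-!
Fix a coordinate `j₀` in the support of a codeword `x`. Each of the `ρ` rows `i` of `H` meeting
column `j₀` is a parity check `∑ⱼ H i j * x j = 0` whose term at `j₀` is nonzero, so it must meet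
the support of `x` in a second column `j`. Since two columns share at most one row, each `j ≠ j₀`
of the support serves at most one such row; hence the support has at least `ρ` elements besides
`j₀`.
-/

namespace Matrix

variable {m n R : Type*} [Fintype n] [Semiring R] [NoZeroDivisors R]

theorem exists_ne_of_mulVec_eq_zero {H : Matrix m n R} {x : n → R} (hker : H *ᵥ x = 0)
    {i : m} {j₀ : n} (hH : H i j₀ ≠ 0) (hx : x j₀ ≠ 0) :
    ∃ j ≠ j₀, x j ≠ 0 ∧ H i j ≠ 0 := by
  by_contra! h
  have hrow : H i ⬝ᵥ x = H i j₀ * x j₀ :=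
    Finset.sum_eq_single j₀
      (fun j _ hj => by
        by_cases hxj : x j = 0
        · rw [hxj, mul_zero]
        · rw [h j hj hxj, zero_mul])
      (fun h => absurd (Finset.mem_univ j₀) h)
  exact mul_ne_zero hH hx (hrow ▸ congrFun hker i)

theorem card_col_support_le_card_support_erase [Fintype m] [DecidableEq m] [DecidableEq n]
    [DecidableEq R] {H : Matrix m n R}
    (hpair : ∀ j j' : n, j ≠ j' →
      (Finset.univ.filter (fun i : m => H i j ≠ 0 ∧ H i j' ≠ 0)).card ≤ 1)
    {x : n → R} (hker : H *ᵥ x = 0) {j₀ : n} (hx : x j₀ ≠ 0) :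
    (Finset.univ.filter (fun i : m => H i j₀ ≠ 0)).card ≤
      ((Finset.univ.filter (fun j : n => x j ≠ 0)).erase j₀).card := by
  set S := (Finset.univ.filter (fun j : n => x j ≠ 0)).erase j₀
  have hcover : Finset.univ.filter (fun i : m => H i j₀ ≠ 0) ⊆
      S.biUnion (fun j => Finset.univ.filter (fun i : m => H i j₀ ≠ 0 ∧ H i j ≠ 0)) := by
    intro i hi
    have hH : H i j₀ ≠ 0 := (Finset.mem_filter.mp hi).2
    obtain ⟨j, hj, hxj, hHj⟩ := exists_ne_of_mulVec_eq_zero hker hH hx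
    simp only [Finset.mem_biUnion, Finset.mem_filter, Finset.mem_univ, true_and]
    exact ⟨j, Finset.mem_erase.mpr ⟨hj, by simpa using hxj⟩, hH, hHj⟩
  calc _ ≤ _ := Finset.card_le_card hcover
    _ ≤ ∑ j ∈ S, (Finset.univ.filter (fun i : m => H i j₀ ≠ 0 ∧ H i j ≠ 0)).card :=
      Finset.card_biUnion_le
    _ ≤ ∑ _j ∈ S, 1 :=
      Finset.sum_le_sum fun j hj => hpair j₀ j (Finset.ne_of_mem_erase hj).symm
    _ = S.card := by rw [Finset.card_eq_sum_ones]

end Matrix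

theorem stmt_3_general (m n ρ : ℕ) (H : Matrix (Fin m) (Fin n) (ZMod 2))
    (hcol : ∀ j : Fin n, (Finset.univ.filter (fun i : Fin m => H i j ≠ 0)).card = ρ)
    (hpair : ∀ j j' : Fin n, j ≠ j' →
      (Finset.univ.filter (fun i : Fin m => H i j ≠ 0 ∧ H i j' ≠ 0)).card ≤ 1)
    (x : Fin n → ZMod 2) (hx : x ≠ 0) (hker : H.mulVec x = 0) :
    ρ + 1 ≤ (Finset.univ.filter (fun j : Fin n => x j ≠ 0)).card := by
  obtain ⟨j₀, hj₀⟩ := Function.ne_iff.mp hx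
  have hmem : j₀ ∈ Finset.univ.filter (fun j : Fin n => x j ≠ 0) := by simpa using hj₀
  rw [← hcol j₀, ← Finset.card_erase_add_one hmem]
  exact Nat.add_le_add_right (card_col_support_le_card_support_erase hpair hker hj₀) 1

/-- If every column of the binary matrix `H` has exactly `ρ ≥ 1` nonzero entries
and any two distinct columns overlap in at most one row position, then every nonzero vector `x`
in the null space of `H` has Hamming weight at least `ρ + 1`; i.e., the binary linear code with
parity check matrix `H` has minimum distance at least `ρ + 1`. -/
theorem stmt_3 (m n ρ : ℕ) (hρ : 1 ≤ ρ) (H : Matrix (Fin m) (Fin n) (ZMod 2))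
    (hcol : ∀ j : Fin n, (Finset.univ.filter (fun i : Fin m => H i j ≠ 0)).card = ρ)
    (hpair : ∀ j j' : Fin n, j ≠ j' →
      (Finset.univ.filter (fun i : Fin m => H i j ≠ 0 ∧ H i j' ≠ 0)).card ≤ 1)
    (x : Fin n → ZMod 2) (hx : x ≠ 0) (hker : H.mulVec x = 0) :
    ρ + 1 ≤ (Finset.univ.filter (fun j : Fin n => x j ≠ 0)).card :=
  stmt_3_general m n ρ H hcol hpair x hx hker
end

section
/- Let q be a prime power and m ≥ 2 an integer, and regard the field F_{q^m} as an m-dimensional vector space over F_q. Let L be a line of EG(m,q) not passing through 0. If u ∈ F_{q^m}^* satisfies uL = L, then u = 1. Consequently, for a primitive element α of F_{q^m}, the lines L, αL, α²L, …, α^{q^m−2}L are pairwise distinct. -/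
/-! Multiplication by `u` is `F`-linear, so if it maps the line `a + F b` into itself it maps the
direction `F b` into itself, which forces `u = c ∈ F`. A scalar `c ≠ 1` with `c a ∈ a + F b` gives
`(c - 1) a ∈ F b`, hence `a ∈ F b` and `0 ∈ a + F b`. For the second part, `α^i L = α^j L` then
forces `α^i = α^j`, while a generator of `K*` has order `|K| - 1 = q^m - 1`. -/

/-- A line of the Euclidean geometry over the field `F`: a coset `a + W` of a 1-dimensional
`F`-subspace `W`, i.e., a set of the form `{a + γ • b : γ ∈ F}` with `b ≠ 0`. -/
def IsLine (F : Type*) [Field F] {V : Type*} [AddCommGroup V] [Module F V]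
    (L : Set V) : Prop :=
  ∃ a b : V, b ≠ 0 ∧ L = Set.range fun γ : F => a + γ • b

section Line

variable {F : Type*} [Field F]

theorem zero_mem_line_of_smul_mem {V : Type*} [AddCommGroup V] [Module F V] {a b : V} {c : F}
    (hc : c ≠ 1) (hca : c • a ∈ Set.range fun γ : F => a + γ • b) :
    (0 : V) ∈ Set.range fun γ : F => a + γ • b := by
  obtain ⟨γ, hγ⟩ := hca
  have hγ' : (c - 1) • a = γ • b := by rw [sub_smul, one_smul, ← hγ, add_sub_cancel_left]
  refine ⟨-((c - 1)⁻¹ * γ), ?_⟩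
  dsimp only
  rw [neg_smul, mul_smul, ← hγ', smul_smul, inv_mul_cancel₀ (sub_ne_zero.mpr hc), one_smul,
    add_neg_cancel]

theorem exists_algebraMap_eq_of_mapsTo_mul_line {K : Type*} [Ring K] [IsDomain K] [Algebra F K]
    {a b u : K} (hb : b ≠ 0)
    (hu : Set.MapsTo (u * ·) (Set.range fun γ : F => a + γ • b)
      (Set.range fun γ : F => a + γ • b)) :
    ∃ c : F, u = algebraMap F K c := by
  obtain ⟨γ₁, h₁⟩ := hu (Set.mem_range_self 0)
  obtain ⟨γ₂, h₂⟩ := hu (Set.mem_range_self 1)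
  refine ⟨γ₂ - γ₁, mul_right_cancel₀ hb ?_⟩
  simp only [zero_smul, add_zero, one_smul] at h₁ h₂
  calc u * b = u * (a + b) - u * a := by noncomm_ring
    _ = algebraMap F K (γ₂ - γ₁) * b := by
      rw [← h₁, ← h₂, ← Algebra.smul_def, sub_smul]; abel

theorem IsLine.eq_one_of_mapsTo_mul {K : Type*} [Ring K] [IsDomain K] [Algebra F K] {L : Set K}
    (hL : IsLine F L) (h0 : (0 : K) ∉ L) {u : K} (hu : Set.MapsTo (u * ·) L L) : u = 1 := by
  obtain ⟨a, b, hb, rfl⟩ := hL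
  obtain ⟨c, rfl⟩ := exists_algebraMap_eq_of_mapsTo_mul_line hb hu
  by_contra hc
  refine h0 (zero_mem_line_of_smul_mem (b := b) (c := c) (fun h => hc (by simp [h])) ?_)
  simpa [Algebra.smul_def] using hu (Set.mem_range_self (0 : F))

theorem IsLine.eq_of_image_mul_subset {K : Type*} [DivisionRing K] [Algebra F K] {L : Set K}
    (hL : IsLine F L) (h0 : (0 : K) ∉ L) {u v : K} (hv : v ≠ 0)
    (h : (u * ·) '' L ⊆ (v * ·) '' L) : u = v := by
  refine ((inv_mul_eq_one₀ hv).mp (hL.eq_one_of_mapsTo_mul h0 fun x hx => ?_)).symm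
  obtain ⟨y, hy, hyx⟩ := h ⟨x, hx, rfl⟩
  simpa [mul_assoc, ← hyx, inv_mul_cancel_left₀ hv] using hy

end Line

theorem orderOf_eq_card_sub_one_of_forall_exists_pow_eq {G₀ : Type*} [GroupWithZero G₀]
    {α : G₀} (hα : α ≠ 0) (hgen : ∀ x : G₀, x ≠ 0 → ∃ k : ℕ, α ^ k = x) :
    orderOf α = Nat.card G₀ - 1 := by
  rw [← Nat.card_units, ← Units.val_mk0 hα, orderOf_units]
  refine orderOf_eq_card_of_forall_mem_powers fun x => ?_
  obtain ⟨k, hk⟩ := hgen x x.ne_zero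
  exact ⟨k, Units.ext (by simp [hk])⟩

theorem stmt_13_general (q m : ℕ) (F K : Type*) [Field F] [Fintype F] [Field K]
    [Fintype K] [Algebra F K] (hq : Fintype.card F = q) (hrank : Module.finrank F K = m)
    (L : Set K) (hL : IsLine F L) (h0 : (0 : K) ∉ L) :
    (∀ u : K, u ≠ 0 → (fun x => u * x) '' L = L → u = 1) ∧
      (∀ α : K, α ≠ 0 → (∀ x : K, x ≠ 0 → ∃ k : ℕ, α ^ k = x) →
        ∀ i j : ℕ, i < q ^ m - 1 → j < q ^ m - 1 → i ≠ j →
          (fun x => α ^ i * x) '' L ≠ (fun x => α ^ j * x) '' L) := by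
  refine ⟨fun u _ hu => hL.eq_one_of_mapsTo_mul h0 (Set.mapsTo_iff_image_subset.mpr hu.subset),
    ?_⟩
  intro α hα hgen i j hi hj hij hEq
  have hord : orderOf α = q ^ m - 1 := by
    rw [orderOf_eq_card_sub_one_of_forall_exists_pow_eq hα hgen, Nat.card_eq_fintype_card,
      Module.card_eq_pow_finrank (K := F), hq, hrank]
  exact hij (pow_injOn_Iio_orderOf (hord ▸ hi) (hord ▸ hj)
    (hL.eq_of_image_mul_subset h0 (pow_ne_zero j hα) hEq.subset))

/-- Regard the field `K = F_{q^m}` as an `m`-dimensional vector space over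
`F = F_q` (with `q` a prime power and `m ≥ 2`). Let `L` be a line of `EG(m,q)` not passing
through `0`. If `u ∈ K*` satisfies `uL = L` then `u = 1`. Consequently, for a primitive element
`α` of `K` (a generator of the cyclic group `K*`), the lines
`L, αL, α²L, …, α^(q^m - 2)L` are pairwise distinct. -/
theorem stmt_13 (q m : ℕ) (hm : 2 ≤ m) (F K : Type*) [Field F] [Fintype F] [Field K]
    [Fintype K] [Algebra F K] (hq : Fintype.card F = q) (hrank : Module.finrank F K = m)
    (L : Set K) (hL : IsLine F L) (h0 : (0 : K) ∉ L) :
    (∀ u : K, u ≠ 0 → (fun x => u * x) '' L = L → u = 1) ∧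
      (∀ α : K, α ≠ 0 → (∀ x : K, x ≠ 0 → ∃ k : ℕ, α ^ k = x) →
        ∀ i j : ℕ, i < q ^ m - 1 → j < q ^ m - 1 → i ≠ j →
          (fun x => α ^ i * x) '' L ≠ (fun x => α ^ j * x) '' L) :=
  stmt_13_general q m F K hq hrank L hL h0
end

section
/- Let q be a prime power and m ≥ 2 an integer, and regard the field F_{q^m} as an m-dimensional vector space over F_q. The multiplicative group F_{q^m}^* acts on the set of lines of EG(m,q) not passing through 0 by L ↦ uL, every orbit of this action has size q^m − 1, and the number of orbits (cyclic classes) equals (q^{m-1} − 1)/(q − 1). -/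
/-!
Multiplication by `u ≠ 0` is an `F`-linear bijection of `F_{q^m}`, so it permutes the lines
missing `0`. The action is free: if `uL = L`, then `u` preserves the direction of `L`, so `u` is a
scalar of `F`, and a scalar `≠ 1` fixing `L` forces `0 ∈ L`. Hence every orbit has `q^m - 1`
elements. To count orbits, observe that the orbit of `L` contains exactly `q` lines through `1`,
namely the `x⁻¹L` with `x ∈ L`, while the lines through `1` missing `0` correspond to the points
of `ℙ(F_{q^m})` other than `[1]`, of which there are `q + q² + ⋯ + q^{m-1}`.
-/

open scoped LinearAlgebra.Projectivization
open Projectivization Finset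

lemma Nat.card_eq_card_mul_of_card_fiber {α β : Type*} [Finite α] [Finite β] (f : α → β) {k : ℕ}
    (h : ∀ b, Nat.card {a // f a = b} = k) : Nat.card α = Nat.card β * k := by
  have := Fintype.ofFinite β
  rw [← Nat.card_congr (Equiv.sigmaFiberEquiv f), Nat.card_sigma]
  simp [h, Nat.card_eq_fintype_card]

lemma Nat.card_subtype_ne {α : Type*} [Finite α] (a : α) :
    Nat.card {x // x ≠ a} = Nat.card α - 1 := by
  classical
  rw [← Nat.card_congr (Equiv.optionSubtypeNe a), Finite.card_option, Nat.add_sub_cancel]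

section Lines

variable {F V : Type*} [Field F] [AddCommGroup V] [Module F V]

lemma IsLine.image_linearMap {W : Type*} [AddCommGroup W] [Module F W] {L : Set V}
    (hL : IsLine F L) (f : V →ₗ[F] W) (hf : Function.Injective f) : IsLine F (f '' L) := by
  obtain ⟨a, b, hb, rfl⟩ := hL
  refine ⟨f a, f b, (map_ne_zero_iff f hf).2 hb, ?_⟩
  rw [← Set.range_comp]
  congr 1
  funext γ
  simp

lemma IsLine.card {L : Set V} (hL : IsLine F L) : Nat.card L = Nat.card F := by
  obtain ⟨a, b, hb, rfl⟩ := hL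
  exact Nat.card_range_of_injective fun γ δ h => smul_left_injective F hb (add_left_cancel h)

/-- Lines through `a` are parametrised by their direction, a point of `ℙ F V`. -/
def lineThrough (a : V) (p : ℙ F V) : Set V :=
  {x | x - a ∈ p.submodule}

lemma lineThrough_mk (a v : V) (hv : v ≠ 0) :
    lineThrough a (mk F v hv) = Set.range fun γ : F => a + γ • v := by
  ext x
  simp [lineThrough, Submodule.mem_span_singleton, eq_sub_iff_add_eq, add_comm]

lemma isLine_lineThrough (a : V) (p : ℙ F V) : IsLine F (lineThrough a p) := by
  induction p using Projectivization.ind with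
  | h v hv => exact ⟨a, v, hv, lineThrough_mk a v hv⟩

lemma self_mem_lineThrough (a : V) (p : ℙ F V) : a ∈ lineThrough a p := by
  simp [lineThrough]

lemma lineThrough_injective (a : V) : Function.Injective (lineThrough (F := F) a) := by
  intro p p' h
  refine submodule_injective (SetLike.ext fun v => ?_)
  simpa [lineThrough] using Set.ext_iff.1 h (v + a)

lemma lineThrough_eq_of_mem {a b : V} {p : ℙ F V} (h : b ∈ lineThrough a p) :
    lineThrough b p = lineThrough a p := by
  ext x
  change x - b ∈ p.submodule ↔ x - a ∈ p.submodule
  rw [← Submodule.sub_mem_iff_left _ h (x := x - a), sub_sub_sub_cancel_right]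

lemma IsLine.exists_lineThrough_eq {L : Set V} (hL : IsLine F L) {a : V} (ha : a ∈ L) :
    ∃ p : ℙ F V, lineThrough a p = L := by
  obtain ⟨c, b, hb, rfl⟩ := hL
  rw [← lineThrough_mk c b hb] at ha ⊢
  exact ⟨_, lineThrough_eq_of_mem ha⟩

lemma mem_lineThrough_iff {a b : V} (h : b ≠ a) {p : ℙ F V} :
    b ∈ lineThrough a p ↔ p = mk F (b - a) (sub_ne_zero.2 h) := by
  induction p using Projectivization.ind with
  | h v hv =>
    rw [eq_comm, mk_eq_mk_iff']
    exact Submodule.mem_span_singleton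

lemma card_lines_through_avoiding [Finite V] {a b : V} (h : b ≠ a) :
    Nat.card {L : Set V // IsLine F L ∧ b ∉ L ∧ a ∈ L} = Nat.card (ℙ F V) - 1 := by
  let e : {p : ℙ F V // p ≠ mk F (b - a) (sub_ne_zero.2 h)} ≃
      {L : Set V // IsLine F L ∧ b ∉ L ∧ a ∈ L} := by
    refine Equiv.ofBijective (fun p => ⟨lineThrough a p.1, isLine_lineThrough a p.1,
      (mem_lineThrough_iff h).not.2 p.2, self_mem_lineThrough a p.1⟩) ⟨?_, ?_⟩
    · exact fun p p' hpp' => Subtype.ext (lineThrough_injective a (congrArg Subtype.val hpp'))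
    · rintro ⟨L, hL, hb, ha⟩
      obtain ⟨p, rfl⟩ := hL.exists_lineThrough_eq ha
      exact ⟨⟨p, (mem_lineThrough_iff h).not.1 hb⟩, rfl⟩
  rw [← Nat.card_congr e, Nat.card_subtype_ne]

end Lines

section CyclicClasses

variable {F K : Type*} [Field F] [Field K] [Algebra F K]

def cyclicClass (L : Set K) : Set (Set K) :=
  {L' | ∃ u : K, u ≠ 0 ∧ L' = (fun x => u * x) '' L}

lemma image_mul_image (u v : K) (L : Set K) :
    (v * ·) '' ((u * ·) '' L) = (v * u * ·) '' L := by
  simp only [Set.image_image, mul_assoc]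

lemma IsLine.image_mul {L : Set K} (hL : IsLine F L) {u : K} (hu : u ≠ 0) :
    IsLine F ((u * ·) '' L) :=
  hL.image_linearMap (LinearMap.mulLeft F u) (mul_right_injective₀ hu)

lemma zero_notMem_image_mul {L : Set K} (h0 : (0 : K) ∉ L) {u : K} (hu : u ≠ 0) :
    (0 : K) ∉ (u * ·) '' L := by
  rintro ⟨x, hx, hux⟩
  exact h0 ((mul_eq_zero.1 hux).resolve_left hu ▸ hx)

lemma IsLine.eq_one_of_image_mul_eq {L : Set K} (hL : IsLine F L) (h0 : (0 : K) ∉ L) {u : K}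
    (h : (u * ·) '' L = L) : u = 1 := by
  obtain ⟨a, b, hb, rfl⟩ := hL
  have mem_line (γ : F) : u * (a + γ • b) ∈ Set.range fun δ : F => a + δ • b :=
    h ▸ Set.mem_image_of_mem _ (Set.mem_range_self γ)
  obtain ⟨s, hs⟩ := mem_line 0
  obtain ⟨t, ht⟩ := mem_line 1
  simp only [Algebra.smul_def, map_zero, map_one, zero_mul, one_mul, add_zero] at hs ht
  have hu : u = algebraMap F K (t - s) :=
    mul_right_cancel₀ hb (by rw [map_sub]; linear_combination hs - ht)
  by_contra hu1
  have hu1' : u - 1 ≠ 0 := sub_ne_zero.2 hu1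
  -- `(u - 1) a = s b`, so `a - (s / (u - 1)) b = 0` lies on the line
  refine h0 ⟨-(s / (t - s - 1)), ?_⟩
  change a + _ • b = 0
  rw [Algebra.smul_def, map_neg, map_div₀, map_sub, map_one, ← hu]
  field_simp
  linear_combination -hs

lemma IsLine.eq_of_image_mul_eq {L : Set K} (hL : IsLine F L) (h0 : (0 : K) ∉ L) {u v : K}
    (hv : v ≠ 0) (h : (u * ·) '' L = (v * ·) '' L) : u = v := by
  refine ((inv_mul_eq_one₀ hv).1 (hL.eq_one_of_image_mul_eq h0 ?_)).symm
  rw [← image_mul_image, h, image_mul_image, inv_mul_cancel₀ hv]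
  simp

lemma mem_cyclicClass_self (L : Set K) : L ∈ cyclicClass L :=
  ⟨1, one_ne_zero, by simp⟩

lemma cyclicClass_image_mul {u : K} (hu : u ≠ 0) (L : Set K) :
    cyclicClass ((u * ·) '' L) = cyclicClass L := by
  ext L'
  constructor
  · rintro ⟨v, hv, rfl⟩
    exact ⟨v * u, mul_ne_zero hv hu, image_mul_image u v L⟩
  · rintro ⟨v, hv, rfl⟩
    refine ⟨v * u⁻¹, mul_ne_zero hv (inv_ne_zero hu), ?_⟩
    rw [image_mul_image, inv_mul_cancel_right₀ hu]

lemma cyclicClass_eq_iff {L L' : Set K} : cyclicClass L' = cyclicClass L ↔ L' ∈ cyclicClass L := by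
  refine ⟨fun h => h ▸ mem_cyclicClass_self L', ?_⟩
  rintro ⟨u, hu, rfl⟩
  exact cyclicClass_image_mul hu L

lemma IsLine.card_cyclicClass {L : Set K} (hL : IsLine F L) (h0 : (0 : K) ∉ L) :
    Nat.card (cyclicClass L) = Nat.card K - 1 := by
  let e : {u : K // u ≠ 0} ≃ cyclicClass L :=
    Equiv.ofBijective (fun u => ⟨_, u.1, u.2, rfl⟩)
      ⟨fun u v huv => Subtype.ext (hL.eq_of_image_mul_eq h0 v.2 (congrArg Subtype.val huv)),
        fun ⟨_, u, hu, hL'⟩ => ⟨⟨u, hu⟩, Subtype.ext hL'.symm⟩⟩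
  rw [← Nat.card_congr e, ← Nat.card_congr unitsEquivNeZero, Nat.card_units]

variable (F K)

abbrev LinesThroughOneAvoidingZero : Type _ :=
  {L : Set K // IsLine F L ∧ (0 : K) ∉ L ∧ (1 : K) ∈ L}

abbrev CyclicClasses : Type _ :=
  {O : Set (Set K) // ∃ L : Set K, IsLine F L ∧ (0 : K) ∉ L ∧ O = cyclicClass L}

variable {F K}

def LinesThroughOneAvoidingZero.cyclicClass (L : LinesThroughOneAvoidingZero F K) :
    CyclicClasses F K :=
  ⟨_root_.cyclicClass L.1, L.1, L.2.1, L.2.2.1, rfl⟩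

/-- The lines through `1` in the class of `L` are the `x⁻¹ L` with `x ∈ L`. -/
lemma card_fiber_cyclicClass (O : CyclicClasses F K) :
    Nat.card {L : LinesThroughOneAvoidingZero F K // L.cyclicClass = O} = Nat.card F := by
  obtain ⟨_, L, hL, h0, rfl⟩ := O
  have hx0 (x : L) : (x : K) ≠ 0 := fun hx => h0 (hx ▸ x.2)
  have hne (x : L) : (x : K)⁻¹ ≠ 0 := inv_ne_zero (hx0 x)
  let e : L ≃ {L' : LinesThroughOneAvoidingZero F K // L'.cyclicClass = ⟨_, L, hL, h0, rfl⟩} := by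
    refine Equiv.ofBijective (fun x => ⟨⟨(x.1⁻¹ * ·) '' L, hL.image_mul (hne x),
      zero_notMem_image_mul h0 (hne x), x.1, x.2, inv_mul_cancel₀ (hx0 x)⟩,
      Subtype.ext (cyclicClass_image_mul (hne x) L)⟩) ⟨?_, ?_⟩
    · intro x y hxy
      exact Subtype.ext (inv_injective
        (hL.eq_of_image_mul_eq h0 (hne y) (congrArg (fun L' => L'.1.1) hxy)))
    · rintro ⟨⟨_, -, -, h1⟩, hL'⟩
      obtain ⟨u, -, rfl⟩ := cyclicClass_eq_iff.1 (congrArg Subtype.val hL')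
      obtain ⟨y, hy, hy1⟩ := h1
      refine ⟨⟨y, hy⟩, Subtype.ext (Subtype.ext ?_)⟩
      simp only [inv_eq_of_mul_eq_one_left hy1]
  rw [← Nat.card_congr e, hL.card]

end CyclicClasses

theorem stmt_14_general (q m : ℕ) (F K : Type*) [Field F] [Fintype F] [Field K]
    [Fintype K] [Algebra F K] (hq : Fintype.card F = q) (hrank : Module.finrank F K = m) :
    (∀ L : Set K, IsLine F L → (0 : K) ∉ L → ∀ u : K, u ≠ 0 →
        IsLine F ((fun x => u * x) '' L) ∧ (0 : K) ∉ (fun x => u * x) '' L) ∧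
      (∀ L : Set K, IsLine F L → (0 : K) ∉ L →
        Nat.card {L' : Set K // ∃ u : K, u ≠ 0 ∧ L' = (fun x => u * x) '' L} = q ^ m - 1) ∧
      Nat.card {O : Set (Set K) // ∃ L : Set K, IsLine F L ∧ (0 : K) ∉ L ∧
          O = {L' : Set K | ∃ u : K, u ≠ 0 ∧ L' = (fun x => u * x) '' L}} =
        (q ^ (m - 1) - 1) / (q - 1) := by
  have hF : Nat.card F = q := by rw [Nat.card_eq_fintype_card, hq]
  have hK : Nat.card K = q ^ m := by
    rw [← hF, ← hrank, Nat.card_eq_fintype_card, Nat.card_eq_fintype_card,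
      Module.card_eq_pow_finrank (K := F) (V := K)]
  refine ⟨fun L hL h0 u hu => ⟨hL.image_mul hu, zero_notMem_image_mul h0 hu⟩,
    fun L hL h0 => hK ▸ hL.card_cyclicClass h0, ?_⟩
  obtain ⟨n, rfl⟩ := Nat.exists_eq_add_one_of_ne_zero (hrank ▸ Module.finrank_pos).ne'
  have hcount : Nat.card (CyclicClasses F K) * q = (∑ i ∈ range n, q ^ i) * q := by
    rw [← hF, ← Nat.card_eq_card_mul_of_card_fiber _ card_fiber_cyclicClass,
      card_lines_through_avoiding zero_ne_one, card_of_finrank F K hrank, sum_range_succ',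
      pow_zero, Nat.add_sub_cancel, sum_mul]
    simp only [pow_succ]
  have hq1 : 1 < q := hF ▸ Finite.one_lt_card
  change Nat.card (CyclicClasses F K) = _
  rw [Nat.add_sub_cancel, ← Nat.geomSum_eq hq1]
  exact Nat.eq_of_mul_eq_mul_right (by omega) hcount

/-- Regard the field `K = F_{q^m}` as an `m`-dimensional vector space over
`F = F_q` (with `q` a prime power and `m ≥ 2`). The multiplicative group `K*` acts on the set
of lines of `EG(m,q)` not passing through `0` by `L ↦ uL`; every orbit of this action has size
`q^m - 1`; and the number of orbits (cyclic classes) equals `(q^(m-1) - 1) / (q - 1)`. -/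
theorem stmt_14 (q m : ℕ) (hm : 2 ≤ m) (F K : Type*) [Field F] [Fintype F] [Field K]
    [Fintype K] [Algebra F K] (hq : Fintype.card F = q) (hrank : Module.finrank F K = m) :
    (∀ L : Set K, IsLine F L → (0 : K) ∉ L → ∀ u : K, u ≠ 0 →
        IsLine F ((fun x => u * x) '' L) ∧ (0 : K) ∉ (fun x => u * x) '' L) ∧
      (∀ L : Set K, IsLine F L → (0 : K) ∉ L →
        Nat.card {L' : Set K // ∃ u : K, u ≠ 0 ∧ L' = (fun x => u * x) '' L} = q ^ m - 1) ∧
      Nat.card {O : Set (Set K) // ∃ L : Set K, IsLine F L ∧ (0 : K) ∉ L ∧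
          O = {L' : Set K | ∃ u : K, u ≠ 0 ∧ L' = (fun x => u * x) '' L}} =
        (q ^ (m - 1) - 1) / (q - 1) :=
  stmt_14_general q m F K hq hrank
end

section
/- Let q be a prime power and m ≥ 2 an integer. Consider the binary incidence matrix H over F₂ whose rows are indexed by the nonzero points of EG(m,q) and whose columns are indexed by the lines of EG(m,q) not passing through the origin, with (p,L)-entry equal to 1 if p ∈ L and 0 otherwise. Then every nonzero vector x over F₂, indexed by the lines not through the origin, satisfying H·x = 0 (i.e., for every nonzero point p, the sum over all lines L containing p of x_L vanishes mod 2) has Hamming weight at least q + 1; that is, the LDPC code defined as the null space of H has minimum distance at least q + 1. -/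
/-!
Take a line `L₀` with `x L₀ ≠ 0`; it misses the origin, so each of its `q` points carries a
parity check. At such a point `L₀` alone would contribute a nonzero sum, so a second line of the
support passes through it. Two distinct lines meet in at most one point, so these `q` further
lines are pairwise distinct, and together with `L₀` they give `q + 1` lines in the support.
-/

lemma IsLine.exists_eq_range_of_mem {F V : Type*} [Field F] [AddCommGroup V] [Module F V]
    {L : Set V} (hL : IsLine F L) {p : V} (hp : p ∈ L) :
    ∃ d : V, d ≠ 0 ∧ L = Set.range fun γ : F => p + γ • d := by
  obtain ⟨a, b, hb, rfl⟩ := hL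
  obtain ⟨γ₀, rfl⟩ := hp
  refine ⟨b, hb, Set.ext fun v => ⟨?_, ?_⟩⟩
  · rintro ⟨γ, rfl⟩
    exact ⟨γ - γ₀, by module⟩
  · rintro ⟨γ, rfl⟩
    exact ⟨γ₀ + γ, by module⟩

lemma Set.range_add_smul_smul {F V : Type*} [Field F] [AddCommGroup V] [Module F V]
    (p d : V) {δ : F} (hδ : δ ≠ 0) :
    (Set.range fun γ : F => p + γ • (δ • d)) = Set.range fun γ : F => p + γ • d := by
  ext v
  constructor
  · rintro ⟨γ, rfl⟩
    exact ⟨γ * δ, by simp only [smul_smul]⟩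
  · rintro ⟨γ, rfl⟩
    exact ⟨γ / δ, by simp only [smul_smul, div_mul_cancel₀ _ hδ]⟩

lemma IsLine.eq_of_mem_of_mem {F V : Type*} [Field F] [AddCommGroup V] [Module F V]
    {L₁ L₂ : Set V} (h₁ : IsLine F L₁) (h₂ : IsLine F L₂) {p p' : V} (hne : p ≠ p')
    (hp₁ : p ∈ L₁) (hp₂ : p ∈ L₂) (hp₁' : p' ∈ L₁) (hp₂' : p' ∈ L₂) : L₁ = L₂ := by
  obtain ⟨d₁, -, rfl⟩ := h₁.exists_eq_range_of_mem hp₁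
  obtain ⟨d₂, -, rfl⟩ := h₂.exists_eq_range_of_mem hp₂
  obtain ⟨γ₁, rfl⟩ := hp₁'
  obtain ⟨γ₂, hγ₂⟩ := hp₂'
  have hγ₁ : γ₁ ≠ 0 := by rintro rfl; simp at hne
  have hγ₂0 : γ₂ ≠ 0 := by rintro rfl; simp_all
  have hd : γ₁ • d₁ = γ₂ • d₂ := (add_left_cancel hγ₂).symm
  rw [← Set.range_add_smul_smul p d₁ hγ₁, hd, Set.range_add_smul_smul p d₂ hγ₂0]

lemma IsLine.subsingleton_inter {F V : Type*} [Field F] [AddCommGroup V] [Module F V]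
    {L₁ L₂ : Set V} (h₁ : IsLine F L₁) (h₂ : IsLine F L₂) (hne : L₁ ≠ L₂) :
    (L₁ ∩ L₂).Subsingleton := by
  rintro p ⟨hp₁, hp₂⟩ p' ⟨hp₁', hp₂'⟩
  by_contra hpp'
  exact hne (h₁.eq_of_mem_of_mem h₂ hpp' hp₁ hp₂ hp₁' hp₂')

lemma IsLine.natCard_eq {F V : Type*} [Field F] [AddCommGroup V] [Module F V]
    {L : Set V} (hL : IsLine F L) : Nat.card L = Nat.card F := by
  obtain ⟨a, b, hb, rfl⟩ := hL
  refine Nat.card_range_of_injective fun γ γ' h => ?_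
  exact smul_left_injective F hb (add_left_cancel h)

lemma card_block_add_one_le_card_support {ι P M : Type*} [Fintype ι] [AddCommMonoid M]
    (B : ι → Set P) [∀ p i, Decidable (p ∈ B i)]
    (hB : ∀ i j, i ≠ j → (B i ∩ B j).Subsingleton)
    (x : ι → M) {i₀ : ι} (hi₀ : x i₀ ≠ 0)
    (hchk : ∀ p ∈ B i₀, ∑ i, (if p ∈ B i then x i else 0) = 0) :
    Nat.card (B i₀) + 1 ≤ Nat.card {i // x i ≠ 0} := by
  have other : ∀ p : B i₀, ∃ i, x i ≠ 0 ∧ i ≠ i₀ ∧ (p : P) ∈ B i := by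
    intro ⟨p, hp⟩
    by_contra! h
    refine hi₀ ?_
    rw [← hchk p hp, Finset.sum_eq_single i₀ _ (by simp), if_pos hp]
    intro i _ hi
    split_ifs with hpi
    · by_contra hxi
      exact h i hxi hi hpi
    · rfl
  choose g hgx hgi₀ hgp using other
  have hg : Function.Injective g := fun p p' hpp' =>
    Subtype.ext <| hB _ _ (hgi₀ p) ⟨hgp p, p.2⟩ ⟨hpp' ▸ hgp p', p'.2⟩
  let f : Option (B i₀) → {i // x i ≠ 0} := fun o => o.elim ⟨i₀, hi₀⟩ fun p => ⟨g p, hgx p⟩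
  have hf : Function.Injective f := by
    rintro (_ | p) (_ | p') h
    · rfl
    · exact absurd (congrArg Subtype.val h).symm (hgi₀ p')
    · exact absurd (congrArg Subtype.val h) (hgi₀ p)
    · exact congrArg some (hg (congrArg Subtype.val h))
  have : Finite (B i₀) := Finite.of_injective g hg
  rw [← Finite.card_option]
  exact Nat.card_le_card_of_injective f hf

open scoped Classical in
theorem stmt_17_general (q m : ℕ) (F : Type*) [Field F] [Fintype F]
    (hq : Fintype.card F = q)
    (x : {L : Set (Fin m → F) // IsLine F L ∧ (0 : Fin m → F) ∉ L} → ZMod 2)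
    (hx : x ≠ 0)
    (hchk : ∀ p : Fin m → F, p ≠ 0 →
      ∑ L : {L : Set (Fin m → F) // IsLine F L ∧ (0 : Fin m → F) ∉ L},
        (if p ∈ (L : Set (Fin m → F)) then x L else 0) = 0) :
    q + 1 ≤
      Nat.card {L : {L : Set (Fin m → F) // IsLine F L ∧ (0 : Fin m → F) ∉ L} // x L ≠ 0} := by
  obtain ⟨L₀, hL₀⟩ := Function.ne_iff.mp hx
  have hcard : Nat.card (L₀ : Set (Fin m → F)) = q := by
    rw [L₀.2.1.natCard_eq, Nat.card_eq_fintype_card, hq]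
  rw [← hcard]
  refine card_block_add_one_le_card_support Subtype.val ?_ x hL₀ ?_
  · exact fun L L' hne => L.2.1.subsingleton_inter L'.2.1 (Subtype.coe_ne_coe.mpr hne)
  · exact fun p hp => hchk p (ne_of_mem_of_not_mem hp L₀.2.2)

open scoped Classical in
/-- For a prime power `q` (the cardinality of a finite field `F`) and `m ≥ 2`,
consider the binary incidence matrix `H` whose rows are indexed by the nonzero points of
`EG(m,q)` and whose columns are indexed by the lines of `EG(m,q)` not through the origin, with
`(p, L)`-entry `1` iff `p ∈ L`. Every nonzero binary vector `x` indexed by the lines not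
through the origin with `H · x = 0` (for every nonzero point `p`, the sum of `x L` over the
lines `L` containing `p` vanishes mod 2) has Hamming weight at least `q + 1`; i.e., the LDPC
code with parity check matrix `H` has minimum distance at least `q + 1`. -/
theorem stmt_17 (q m : ℕ) (hm : 2 ≤ m) (F : Type*) [Field F] [Fintype F]
    (hq : Fintype.card F = q)
    (x : {L : Set (Fin m → F) // IsLine F L ∧ (0 : Fin m → F) ∉ L} → ZMod 2)
    (hx : x ≠ 0)
    (hchk : ∀ p : Fin m → F, p ≠ 0 →
      ∑ L : {L : Set (Fin m → F) // IsLine F L ∧ (0 : Fin m → F) ∉ L},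
        (if p ∈ (L : Set (Fin m → F)) then x L else 0) = 0) :
    q + 1 ≤
      Nat.card {L : {L : Set (Fin m → F) // IsLine F L ∧ (0 : Fin m → F) ∉ L} // x L ≠ 0} :=
  stmt_17_general q m F hq x hx hchk
end
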